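/- arXiv:2403.12394 — 2 statements merged into one kernel-verified Lean document; each statement's English description precedes it below -/
import Mathlib

section
/- The hypergraph Laplacian Δφ := div(∇φ) satisfies, for every vertex v ∈ V, Δφ(v) = (1/μ(v)) Σ_{e∈E : v∈e} (ω_e/(δ_e−1)) Σ_{u∈e, u≠v} (φ(u) − φ(v)). -/
/-- The hypergraph gradient on a directed hyperedge, encoded as a list of vertices:
`∇φ(e⃗) = √(ω_{e⃗}/(δ_{e⃗}−1)) Σ_{u∈e⃗} (φ u − φ(e⃗(1)))`. -/
noncomputable def hGrad {V : Type*} [DecidableEq V] [Inhabited V] (ω : Finset V → ℝ)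
    (φ : V → ℝ) (l : List V) : ℝ :=
  Real.sqrt (ω l.toFinset / ((l.length : ℝ) - 1)) *
    (l.map (fun u => φ u - φ l.headI)).sum

/-- The set of directed hyperedges arising from the hyperedge `e`: all orderings
(permutations) of the vertices of `e`. -/
noncomputable def dirEdges {V : Type*} [DecidableEq V] (e : Finset V) : Finset (List V) :=
  e.toList.permutations.toFinset

/-- Inner product on functions on the symmetric directed hyperedge set:
`⟨F,G⟩_{E⃗} = Σ_{e⃗∈E⃗} (1/δ_{e⃗}!) F(e⃗) G(e⃗)`. -/
noncomputable def hInnerE {V : Type*} [DecidableEq V] (E : Finset (Finset V))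
    (F G : List V → ℝ) : ℝ :=
  ∑ e ∈ E, ∑ l ∈ dirEdges e, (1 / (Nat.factorial l.length : ℝ)) * (F l * G l)
/-- The hypergraph divergence:
`div φ(v) = −(1/μ v) Σ_{e⃗∋v} (√ω/(δ!√(δ−1))) φ(e⃗) + (1/μ v) Σ_{e⃗(1)=v} (δ√ω/(δ!√(δ−1))) φ(e⃗)`. -/
noncomputable def hDiv {V : Type*} [DecidableEq V] [Inhabited V]
    (E : Finset (Finset V)) (ω : Finset V → ℝ) (μ : V → ℝ)
    (φ : List V → ℝ) (v : V) : ℝ :=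
  -(1 / μ v) * ∑ e ∈ E, ∑ l ∈ (dirEdges e).filter (fun l => v ∈ l),
      (Real.sqrt (ω e) / ((Nat.factorial l.length : ℝ) * Real.sqrt ((l.length : ℝ) - 1))) * φ l
  + (1 / μ v) * ∑ e ∈ E, ∑ l ∈ (dirEdges e).filter (fun l => l.headI = v),
      ((l.length : ℝ) * Real.sqrt (ω e) / ((Nat.factorial l.length : ℝ) * Real.sqrt ((l.length : ℝ) - 1))) * φ l

/-- The hypergraph Laplacian:
`Δφ(v) = (1/μ v) Σ_{e∈E, v∈e} (ω e/(δ_e−1)) Σ_{u∈e, u≠v} (φ u − φ v)`. -/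
noncomputable def hLap {V : Type*} [DecidableEq V] (E : Finset (Finset V)) (ω : Finset V → ℝ)
    (μ : V → ℝ) (φ : V → ℝ) (v : V) : ℝ :=
  (1 / μ v) * ∑ e ∈ E.filter (fun e => v ∈ e),
    (ω e / ((e.card : ℝ) - 1)) * ∑ u ∈ e.erase v, (φ u - φ v)

/-! Each hyperedge `e` contributes on its own. Every vertex of `e` heads exactly `(|e| - 1)!` of
its orderings, so summing the gradient over all orderings gives a multiple of
`Σ_w Σ_u (φ u - φ w) = 0`, and the first term of the divergence vanishes. In the second term only
the orderings headed by `v` survive, each with gradient `√(ω e / (|e| - 1)) Σ_{u ≠ v} (φ u - φ v)`,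
and the factorials and square roots combine to `ω e / (|e| - 1)`. -/

section DirEdges

variable {V : Type*} [DecidableEq V] {e : Finset V} {l : List V}

theorem mem_dirEdges : l ∈ dirEdges e ↔ l.Perm e.toList := by
  simp [dirEdges, List.mem_permutations]

theorem length_of_mem_dirEdges (h : l ∈ dirEdges e) : l.length = e.card := by
  rw [(mem_dirEdges.mp h).length_eq, Finset.length_toList]

theorem nodup_of_mem_dirEdges (h : l ∈ dirEdges e) : l.Nodup :=
  (mem_dirEdges.mp h).nodup_iff.mpr e.nodup_toList

theorem toFinset_of_mem_dirEdges (h : l ∈ dirEdges e) : l.toFinset = e := by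
  rw [List.toFinset_eq_of_perm _ _ (mem_dirEdges.mp h), Finset.toList_toFinset]

theorem mem_iff_of_mem_dirEdges (h : l ∈ dirEdges e) {v : V} : v ∈ l ↔ v ∈ e := by
  rw [← List.mem_toFinset, toFinset_of_mem_dirEdges h]

theorem card_dirEdges (e : Finset V) : (dirEdges e).card = e.card.factorial := by
  rw [dirEdges, List.toFinset_card_of_nodup (List.nodup_permutations _ e.nodup_toList),
    List.length_permutations, Finset.length_toList]

variable [Inhabited V]

theorem headI_mem_of_mem_dirEdges (he : e.Nonempty) (h : l ∈ dirEdges e) : l.headI ∈ e := by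
  rw [← mem_iff_of_mem_dirEdges h]
  cases l with
  | nil =>
    have h0 : 0 = e.card := length_of_mem_dirEdges h
    exact absurd (Finset.card_eq_zero.mp h0.symm) he.ne_empty
  | cons a t => exact List.mem_cons_self

theorem filter_headI_dirEdges {w : V} (hw : w ∈ e) :
    (dirEdges e).filter (·.headI = w) =
      (dirEdges (e.erase w)).map ⟨List.cons w, List.cons_injective⟩ := by
  have hperm : e.toList.Perm (w :: (e.erase w).toList) := by
    simpa [Finset.insert_erase hw] using Finset.toList_insert (Finset.notMem_erase w e)
  ext l
  simp only [Finset.mem_filter, Finset.mem_map, Function.Embedding.coeFn_mk, mem_dirEdges]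
  constructor
  · rintro ⟨hl, rfl⟩
    cases l with
    | nil => simpa using hl.trans hperm
    | cons a t => exact ⟨t, (List.perm_cons a).mp (hl.trans hperm), rfl⟩
  · rintro ⟨t, ht, rfl⟩
    exact ⟨((List.perm_cons w).mpr ht).trans hperm.symm, rfl⟩

theorem card_filter_headI_dirEdges {w : V} (hw : w ∈ e) :
    ((dirEdges e).filter (·.headI = w)).card = (e.card - 1).factorial := by
  rw [filter_headI_dirEdges hw, Finset.card_map, card_dirEdges, Finset.card_erase_of_mem hw]

theorem sum_dirEdges_headI {M : Type*} [AddCommMonoid M] (he : e.Nonempty) (g : V → M) :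
    ∑ l ∈ dirEdges e, g l.headI = (e.card - 1).factorial • ∑ w ∈ e, g w := by
  rw [← Finset.sum_fiberwise_of_maps_to (fun l hl => headI_mem_of_mem_dirEdges he hl),
    Finset.smul_sum]
  refine Finset.sum_congr rfl fun w hw => ?_
  rw [Finset.sum_congr rfl fun l hl => congrArg g (Finset.mem_filter.mp hl).2, Finset.sum_const,
    card_filter_headI_dirEdges hw]

end DirEdges

theorem Finset.sum_sum_sub_eq_zero {α M : Type*} [AddCommGroup M] (s : Finset α) (f : α → M) :
    ∑ w ∈ s, ∑ u ∈ s, (f u - f w) = 0 := by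
  simp [Finset.sum_sub_distrib, Finset.sum_const, Finset.smul_sum]

section Edge

variable {V : Type*} [DecidableEq V] [Inhabited V] {e : Finset V} (ω : Finset V → ℝ) (φ : V → ℝ)

theorem hGrad_of_mem_dirEdges {l : List V} (h : l ∈ dirEdges e) :
    hGrad ω φ l = √(ω e / ((e.card : ℝ) - 1)) * ∑ u ∈ e, (φ u - φ l.headI) := by
  rw [hGrad, toFinset_of_mem_dirEdges h, length_of_mem_dirEdges h,
    ← List.sum_toFinset _ (nodup_of_mem_dirEdges h), toFinset_of_mem_dirEdges h]

theorem sum_hGrad_dirEdges : ∑ l ∈ dirEdges e, hGrad ω φ l = 0 := by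
  rw [Finset.sum_congr rfl fun l hl => hGrad_of_mem_dirEdges ω φ hl, ← Finset.mul_sum]
  rcases e.eq_empty_or_nonempty with rfl | he
  · simp
  · rw [sum_dirEdges_headI he fun w => ∑ u ∈ e, (φ u - φ w), Finset.sum_sum_sub_eq_zero,
      smul_zero, mul_zero]

theorem sum_filter_mem_dirEdges_mul_hGrad (f : ℕ → ℝ) (v : V) :
    ∑ l ∈ (dirEdges e).filter (fun l => v ∈ l), f l.length * hGrad ω φ l = 0 := by
  by_cases hv : v ∈ e
  · rw [Finset.filter_true_of_mem fun l hl => (mem_iff_of_mem_dirEdges hl).mpr hv,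
      Finset.sum_congr rfl fun l hl => by rw [length_of_mem_dirEdges hl], ← Finset.mul_sum,
      sum_hGrad_dirEdges, mul_zero]
  · rw [Finset.filter_false_of_mem fun l hl h => hv ((mem_iff_of_mem_dirEdges hl).mp h),
      Finset.sum_empty]

theorem sum_filter_headI_dirEdges_mul_hGrad (f : ℕ → ℝ) {v : V} (hv : v ∈ e) :
    ∑ l ∈ (dirEdges e).filter (fun l => l.headI = v), f l.length * hGrad ω φ l =
      (e.card - 1).factorial * (f e.card * √(ω e / ((e.card : ℝ) - 1))) *
        ∑ u ∈ e.erase v, (φ u - φ v) := by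
  have hfiber : ∀ l ∈ (dirEdges e).filter (fun l => l.headI = v), f l.length * hGrad ω φ l =
      f e.card * √(ω e / ((e.card : ℝ) - 1)) * ∑ u ∈ e.erase v, (φ u - φ v) := by
    intro l hl
    obtain ⟨hmem, rfl⟩ := Finset.mem_filter.mp hl
    rw [hGrad_of_mem_dirEdges ω φ hmem, length_of_mem_dirEdges hmem, mul_assoc,
      Finset.sum_erase e (sub_self _)]
  rw [Finset.sum_congr rfl hfiber, Finset.sum_const, card_filter_headI_dirEdges hv, nsmul_eq_mul,
    ← mul_assoc]

end Edge

theorem factorial_pred_mul_hDiv_weight_mul_sqrt {n : ℕ} (hn : n ≠ 0) {w : ℝ} (hw : 0 ≤ w) :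
    ((n - 1).factorial : ℝ) * ((n : ℝ) * √w / ((n.factorial : ℝ) * √((n : ℝ) - 1)) *
      √(w / ((n : ℝ) - 1))) = w / ((n : ℝ) - 1) := by
  have hn1 : (0 : ℝ) ≤ (n : ℝ) - 1 := by
    have : (1 : ℝ) ≤ n := by exact_mod_cast Nat.one_le_iff_ne_zero.mpr hn
    linarith
  rw [← Nat.mul_factorial_pred hn, Real.sqrt_div hw, Nat.cast_mul]
  have hfac : ((n - 1).factorial : ℝ) ≠ 0 := by positivity
  have hn0 : (n : ℝ) ≠ 0 := by exact_mod_cast hn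
  calc _ = (√w * √w) / (√((n : ℝ) - 1) * √((n : ℝ) - 1)) := by field_simp
    _ = _ := by rw [Real.mul_self_sqrt hw, Real.mul_self_sqrt hn1]

theorem sum_filter_headI_dirEdges_hDiv_summand {V : Type*} [DecidableEq V] [Inhabited V]
    (ω : Finset V → ℝ) (φ : V → ℝ) {e : Finset V} (hω : 0 ≤ ω e) (v : V) :
    ∑ l ∈ (dirEdges e).filter (fun l => l.headI = v),
      ((l.length : ℝ) * √(ω e) / ((Nat.factorial l.length : ℝ) * √((l.length : ℝ) - 1))) *
        hGrad ω φ l =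
      if v ∈ e then ω e / ((e.card : ℝ) - 1) * ∑ u ∈ e.erase v, (φ u - φ v) else 0 := by
  split_ifs with hv
  · rw [sum_filter_headI_dirEdges_mul_hGrad ω φ
      (fun n => (n : ℝ) * √(ω e) / ((n.factorial : ℝ) * √((n : ℝ) - 1))) hv,
      factorial_pred_mul_hDiv_weight_mul_sqrt (Finset.card_ne_zero_of_mem hv) hω]
  rcases e.eq_empty_or_nonempty with rfl | he
  · simp [dirEdges, Finset.sum_filter]
  · rw [Finset.filter_false_of_mem fun l hl (hhead : l.headI = v) =>
      hv (hhead ▸ headI_mem_of_mem_dirEdges he hl), Finset.sum_empty]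

theorem stmt_2_general {V : Type*} [DecidableEq V] [Inhabited V]
    (E : Finset (Finset V)) (ω : Finset V → ℝ) (μ : V → ℝ)
    (hω : ∀ e ∈ E, 0 < ω e)
    (φ : V → ℝ) (v : V) :
    hDiv E ω μ (hGrad ω φ) v = hLap E ω μ φ v := by
  unfold hDiv hLap
  rw [Finset.sum_congr rfl fun e _ => sum_filter_mem_dirEdges_mul_hGrad ω φ
      (fun n => √(ω e) / ((n.factorial : ℝ) * √((n : ℝ) - 1))) v,
    Finset.sum_const_zero, mul_zero, zero_add,
    Finset.sum_congr rfl fun e he => sum_filter_headI_dirEdges_hDiv_summand ω φ (hω e he).le v,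
    Finset.sum_filter]

/-- the hypergraph Laplacian `Δφ := div(∇φ)` satisfies, at every vertex,
`Δφ(v) = (1/μ v) Σ_{e∋v} (ω e/(δ_e−1)) Σ_{u∈e,u≠v} (φ u − φ v)`. -/
theorem stmt_2 {V : Type*} [Fintype V] [DecidableEq V] [Inhabited V]
    (E : Finset (Finset V)) (ω : Finset V → ℝ) (μ : V → ℝ)
    (hcard : ∀ e ∈ E, 2 ≤ e.card) (hω : ∀ e ∈ E, 0 < ω e) (hμ : ∀ v : V, 0 < μ v)
    (φ : V → ℝ) (v : V) :
    hDiv E ω μ (hGrad ω φ) v = hLap E ω μ φ v :=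
  stmt_2_general E ω μ hω φ v
end

section
/- (Positivity of solutions) Let H = (V, E) be a connected finite hypergraph, h : V → ℝ with h > 0, and f : V × ℝ → ℝ with f(v, s) ≥ 0 for s ≥ 0 and f(v, 0) = 0. If φ : V → ℝ is a nontrivial (not identically zero) solution of −Δφ(v) + h(v)φ(v) = f(v, φ⁺(v)) for all v ∈ V, where φ⁺ = max{φ, 0}, then φ(v) > 0 for all v ∈ V, and hence φ solves −Δφ + hφ = f(v, φ). -/
/-- Connectedness of a hypergraph: any two distinct vertices are joined by a
hyperpath, i.e. a sequence of hyperedges with consecutive nonempty intersections. -/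
def hConnected {V : Type*} [DecidableEq V] (E : Finset (Finset V)) : Prop :=
  ∀ u v : V, u ≠ v → ∃ γ : List (Finset V), ∃ hγ : γ ≠ [],
    (∀ e ∈ γ, e ∈ E) ∧ γ.Chain' (fun a b => (a ∩ b).Nonempty) ∧
    u ∈ γ.head hγ ∧ v ∈ γ.getLast hγ

/-!
At a minimum point of `φ` every term of `Δφ` is nonnegative, so `Δφ ≥ 0` there, and `Δφ = 0`
forces `φ` to be constant on every hyperedge through that point. Since `f(v, φ⁺) ≥ 0`, `φ` is a
supersolution `−Δφ + hφ ≥ 0`; at a minimum point this gives `h φ ≥ Δφ ≥ 0`, so `φ ≥ 0`. The zero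
set of `φ` then consists of minimum points with `Δφ ≤ 0`, so it is closed under hyperedges and, by
connectedness, empty or all of `V`. Hence `φ > 0` and `φ⁺ = φ`.
-/

namespace hConnected

variable {V : Type*} [DecidableEq V] {E : Finset (Finset V)}

theorem forall_of_closed (hconn : hConnected E) {P : V → Prop}
    (hP : ∀ e ∈ E, ∀ v ∈ e, P v → ∀ u ∈ e, P u) {v : V} (hv : P v) (u : V) : P u := by
  rcases eq_or_ne v u with rfl | hvu
  · exact hv
  obtain ⟨γ, hγ, hγE, hchain, hvγ, huγ⟩ := hconn v u hvu
  have hall : ∀ e ∈ γ, ∀ x ∈ e, P x := by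
    refine (List.IsChain.iff_mem.mp hchain).induction _ _ ?_ ?_
    · rintro a b ⟨-, hb, y, hy⟩ ha
      rw [Finset.mem_inter] at hy
      exact hP b (hγE b hb) y hy.2 (ha y hy.1)
    · exact fun hne => hP _ (hγE _ (List.head_mem hne)) v hvγ hv
  exact hall _ (List.getLast_mem hγ) u huγ

end hConnected

section MaximumPrinciple

variable {V : Type*} [DecidableEq V] {E : Finset (Finset V)} {ω : Finset V → ℝ} {μ : V → ℝ}
  {φ : V → ℝ} {v : V}

theorem hLap_term_nonneg (hω : ∀ e ∈ E, 0 ≤ ω e) (hmin : ∀ u, φ v ≤ φ u)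
    {e : Finset V} (he : e ∈ E.filter (fun e => v ∈ e)) :
    0 ≤ ω e / ((e.card : ℝ) - 1) * ∑ u ∈ e.erase v, (φ u - φ v) := by
  rw [Finset.mem_filter] at he
  have hcard : (1 : ℝ) ≤ e.card := by exact_mod_cast Finset.card_pos.mpr ⟨v, he.2⟩
  exact mul_nonneg (div_nonneg (hω e he.1) (by linarith))
    (Finset.sum_nonneg fun u _ => sub_nonneg.mpr (hmin u))

theorem hLap_nonneg_of_forall_le (hω : ∀ e ∈ E, 0 ≤ ω e) (hμ : 0 ≤ μ v)
    (hmin : ∀ u, φ v ≤ φ u) : 0 ≤ hLap E ω μ φ v :=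
  mul_nonneg (one_div_nonneg.mpr hμ) (Finset.sum_nonneg fun _ he => hLap_term_nonneg hω hmin he)

theorem eq_of_forall_le_of_hLap_nonpos (hω : ∀ e ∈ E, 0 < ω e) (hμ : 0 < μ v)
    (hmin : ∀ u, φ v ≤ φ u) (hΔ : hLap E ω μ φ v ≤ 0) {e : Finset V} (heE : e ∈ E)
    (hve : v ∈ e) {u : V} (hue : u ∈ e) : φ u = φ v := by
  rcases eq_or_ne u v with rfl | huv
  · rfl
  have hterms := (Finset.sum_eq_zero_iff_of_nonneg fun _ he =>
    hLap_term_nonneg (fun e he => (hω e he).le) hmin he).mp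
  have hsum : ∑ e ∈ E.filter (fun e => v ∈ e),
      ω e / ((e.card : ℝ) - 1) * ∑ u ∈ e.erase v, (φ u - φ v) = 0 := by
    have h0 := le_antisymm hΔ (hLap_nonneg_of_forall_le (fun e he => (hω e he).le) hμ.le hmin)
    simpa [hLap, hμ.ne'] using h0
  have hcard : (2 : ℝ) ≤ e.card := by
    exact_mod_cast Finset.one_lt_card.mpr ⟨u, hue, v, hve, huv⟩
  have hinner : ∑ x ∈ e.erase v, (φ x - φ v) = 0 :=
    (mul_eq_zero.mp (hterms hsum e (Finset.mem_filter.mpr ⟨heE, hve⟩))).resolve_left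
      (div_pos (hω e heE) (by linarith)).ne'
  have := (Finset.sum_eq_zero_iff_of_nonneg fun x _ => sub_nonneg.mpr (hmin x)).mp hinner u
    (Finset.mem_erase.mpr ⟨huv, hue⟩)
  linarith

variable [Finite V] {c : V → ℝ}

theorem nonneg_of_neg_hLap_add_mul_nonneg (hω : ∀ e ∈ E, 0 ≤ ω e) (hμ : ∀ v, 0 ≤ μ v)
    (hc : ∀ v, 0 < c v) (hφ : ∀ v, 0 ≤ -hLap E ω μ φ v + c v * φ v) (v : V) : 0 ≤ φ v := by
  have : Nonempty V := ⟨v⟩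
  obtain ⟨v₀, hmin⟩ := Finite.exists_min φ
  suffices 0 ≤ φ v₀ from this.trans (hmin v)
  have hΔ := hLap_nonneg_of_forall_le hω (hμ v₀) hmin
  have := hφ v₀
  exact nonneg_of_mul_nonneg_right (by linarith) (hc v₀)

theorem pos_of_neg_hLap_add_mul_nonneg (hconn : hConnected E) (hω : ∀ e ∈ E, 0 < ω e)
    (hμ : ∀ v, 0 < μ v) (hc : ∀ v, 0 < c v) (hφ : ∀ v, 0 ≤ -hLap E ω μ φ v + c v * φ v)
    (hne : φ ≠ 0) (v : V) : 0 < φ v := by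
  have hnonneg := nonneg_of_neg_hLap_add_mul_nonneg (fun e he => (hω e he).le)
    (fun v => (hμ v).le) hc hφ
  refine (hnonneg v).lt_of_ne' fun hv => hne (funext fun u => ?_)
  refine hconn.forall_of_closed (P := fun x => φ x = 0) ?_ hv u
  intro e heE x hxe hx y hye
  have hmin : ∀ u, φ x ≤ φ u := fun u => hx ▸ hnonneg u
  have hΔ : hLap E ω μ φ x ≤ 0 := by simpa [hx] using hφ x
  rw [eq_of_forall_le_of_hLap_nonpos hω (hμ x) hmin hΔ heE hxe hye, hx]

end MaximumPrinciple

theorem stmt_17_general {V : Type*} [Fintype V] [DecidableEq V]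
    (E : Finset (Finset V)) (ω : Finset V → ℝ) (μ : V → ℝ)
    (hω : ∀ e ∈ E, 0 < ω e) (hμ : ∀ v : V, 0 < μ v)
    (hconn : hConnected E)
    (h : V → ℝ) (hh : ∀ v, 0 < h v)
    (f : V → ℝ → ℝ) (hf₁ : ∀ v s, 0 ≤ s → 0 ≤ f v s)
    (φ : V → ℝ) (hne : φ ≠ 0)
    (hsol : ∀ v, -(hLap E ω μ φ v) + h v * φ v = f v (max (φ v) 0)) :
    (∀ v, 0 < φ v) ∧ ∀ v, -(hLap E ω μ φ v) + h v * φ v = f v (φ v) := by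
  have hsuper : ∀ v, 0 ≤ -hLap E ω μ φ v + h v * φ v := fun v =>
    hsol v ▸ hf₁ v _ (le_max_right _ _)
  have hpos := pos_of_neg_hLap_add_mul_nonneg hconn hω hμ hh hsuper hne
  exact ⟨hpos, fun v => by rw [hsol v, max_eq_left (hpos v).le]⟩

/-- positivity of solutions: on a connected finite hypergraph, if
`h > 0`, `f(v,s) ≥ 0` for `s ≥ 0`, `f(v,0) = 0`, and `φ` is a nontrivial solution of
`−Δφ + hφ = f(v, φ⁺)`, then `φ > 0` on `V` and hence `φ` solves `−Δφ + hφ = f(v, φ)`. -/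
theorem stmt_17 {V : Type*} [Fintype V] [DecidableEq V]
    (E : Finset (Finset V)) (ω : Finset V → ℝ) (μ : V → ℝ)
    (hcard : ∀ e ∈ E, 2 ≤ e.card) (hω : ∀ e ∈ E, 0 < ω e) (hμ : ∀ v : V, 0 < μ v)
    (hconn : hConnected E)
    (h : V → ℝ) (hh : ∀ v, 0 < h v)
    (f : V → ℝ → ℝ) (hf₁ : ∀ v s, 0 ≤ s → 0 ≤ f v s) (hf₂ : ∀ v, f v 0 = 0)
    (φ : V → ℝ) (hne : φ ≠ 0)
    (hsol : ∀ v, -(hLap E ω μ φ v) + h v * φ v = f v (max (φ v) 0)) :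
    (∀ v, 0 < φ v) ∧ ∀ v, -(hLap E ω μ φ v) + h v * φ v = f v (φ v) :=
  stmt_17_general E ω μ hω hμ hconn h hh f hf₁ φ hne hsol
end
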